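/- Let n ≥ 1 and ϖ ≥ 1 be integers and s ∈ ℝⁿ, and consider the AP-A sequences defined by a_0 = 0, m_0 = P_{≥|s|}(a_0) = |s|, and for i ≥ 1: b_i = P_ϖ(m_{i−1} − a_{i−1}), λ_i = ‖m_{i−1} − a_{i−1}‖₂² / ‖b_i‖₂² (with λ_i := 0 if b_i = 0), a_i = a_{i−1} + λ_i·b_i, and m_i = P_{≥|s|}(a_i). Assume that for every i ≥ 1, b_i = 0 implies m_{i−1} = a_{i−1}. Then there exists m† ∈ S_{≥|s|} ∩ S_ϖ such that the sequence (m_i) converges to m† and ‖m_{i+1} − m†‖₂ ≤ ‖m_i − m†‖₂ for all i ≥ 0. -/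

import Mathlib

open scoped BigOperators

noncomputable section

/-- Low-frequency index set `K_ω ⊆ {0,…,n−1}`. -/
def Kset (n ω : ℕ) : Set (Fin n) := {k | (k : ℕ) ≤ ω - 1 ∨ n - ω + 1 ≤ (k : ℕ)}

/-- The set of ω-bandlimited real vectors `S_ω`. -/
def Sband (n ω : ℕ) : Set (EuclideanSpace ℝ (Fin n)) :=
  {x | ∀ k : Fin n, k ∉ Kset n ω →
    ∑ j : Fin n, (x j : ℂ) *
      Complex.exp (-(2 * (Real.pi : ℂ) * Complex.I * ((j : ℕ) : ℂ) * ((k : ℕ) : ℂ)) / (n : ℂ)) = 0}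

/-- The constraint set `S_{≥|s|}`. -/
def Sgeq (n : ℕ) (s : EuclideanSpace ℝ (Fin n)) : Set (EuclideanSpace ℝ (Fin n)) :=
  {x | ∀ j, |s j| ≤ x j}

/-- The metric projection onto `S_{≥|s|}`: componentwise `max(z_j, |s_j|)`. -/
def Pgeq (n : ℕ) (s z : EuclideanSpace ℝ (Fin n)) : EuclideanSpace ℝ (Fin n) :=
  (WithLp.equiv 2 (Fin n → ℝ)).symm (fun j => max (z j) |s j|)

/-- The rectangular low-pass filter `P_ϖ` (the orthogonal projection onto `S_ϖ`):
`(P_ϖ z)_j = (1/n)·Σ_{k∈K_ϖ} Σ_{l} z_l·cos(2πk(j−l)/n)`. -/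
def Pband (n ϖ : ℕ) (z : EuclideanSpace ℝ (Fin n)) : EuclideanSpace ℝ (Fin n) :=
  (WithLp.equiv 2 (Fin n → ℝ)).symm (fun j =>
    (1 / (n : ℝ)) *
      ∑ k ∈ Finset.univ.filter (fun k : Fin n => (k : ℕ) ≤ ϖ - 1 ∨ n - ϖ + 1 ≤ (k : ℕ)),
        ∑ l : Fin n, z l * Real.cos (2 * Real.pi * (k : ℕ) * (((j : ℕ) : ℝ) - ((l : ℕ) : ℝ)) / (n : ℝ)))


/-!
`P_ϖ` is an orthogonal projection: on the discrete Fourier side it multiplies by the indicator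
of `K_ϖ`, a set closed under `k ↦ -k`. `P_{≥|s|}` is the metric projection onto the closed convex
set `S_{≥|s|}`. For every `y ∈ S_{≥|s|} ∩ S_ϖ` the relaxed step `a_i = a_{i-1} + λ_i b_i`, whose
step length `λ_i` is at least `1`, does not move away from `y` compared with `m_{i-1}`, and the
projection onto `S_{≥|s|}` then gives `‖m_i - y‖² + ‖m_i - a_i‖² ≤ ‖m_{i-1} - y‖²`. So `(m_i)`
is bounded, `m_i - a_i → 0`, every cluster point lies in both sets, and Fejér monotonicity with
respect to a cluster point makes the whole sequence converge to it.
-/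

open Finset Filter Topology Complex
open scoped Real RealInnerProductSpace

section Fejer

variable {X : Type*} [MetricSpace X]

theorem tendsto_of_antitone_dist_of_subseq {x : ℕ → X} {z : X}
    (hx : Antitone fun i => dist (x i) z) {φ : ℕ → ℕ} (hφ : StrictMono φ)
    (hz : Tendsto (x ∘ φ) atTop (𝓝 z)) : Tendsto x atTop (𝓝 z) := by
  have hinf := tendsto_atTop_ciInf hx ⟨0, by rintro _ ⟨i, rfl⟩; exact dist_nonneg⟩
  have hzero : ⨅ i, dist (x i) z = 0 :=
    tendsto_nhds_unique (hinf.comp hφ.tendsto_atTop) (tendsto_iff_dist_tendsto_zero.mp hz)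
  rw [tendsto_iff_dist_tendsto_zero, ← hzero]
  exact hinf

theorem exists_tendsto_of_dist_succ_le [ProperSpace X] {F : Set X} {x : ℕ → X}
    (hF : F.Nonempty) (hx : ∀ y ∈ F, ∀ i, dist (x (i + 1)) y ≤ dist (x i) y)
    (hlim : ∀ z (φ : ℕ → ℕ), StrictMono φ → Tendsto (x ∘ φ) atTop (𝓝 z) → z ∈ F) :
    ∃ z ∈ F, Tendsto x atTop (𝓝 z) := by
  obtain ⟨y, hy⟩ := hF
  have hball : ∀ i, x i ∈ Metric.closedBall y (dist (x 0) y) := fun i =>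
    antitone_nat_of_succ_le (f := fun i => dist (x i) y) (hx y hy) (Nat.zero_le i)
  obtain ⟨z, -, φ, hφ, hz⟩ := (isCompact_closedBall y (dist (x 0) y)).tendsto_subseq hball
  have hzF := hlim z φ hφ hz
  exact ⟨z, hzF, tendsto_of_antitone_dist_of_subseq (antitone_nat_of_succ_le (hx z hzF)) hφ hz⟩

end Fejer

theorem tendsto_zero_of_le_sub_succ {u e : ℕ → ℝ} (hu : ∀ i, 0 ≤ u i) (he : ∀ i, 0 ≤ e i)
    (h : ∀ i, e i ≤ u i - u (i + 1)) : Tendsto e atTop (𝓝 0) := by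
  have hanti : Antitone u := antitone_nat_of_succ_le fun i => by linarith [he i, h i]
  have hconv := tendsto_atTop_ciInf hanti ⟨0, by rintro _ ⟨i, rfl⟩; exact hu i⟩
  have hdiff : Tendsto (fun i => u i - u (i + 1)) atTop (𝓝 0) := by
    simpa using hconv.sub (hconv.comp (tendsto_add_atTop_nat 1))
  exact squeeze_zero he h hdiff

section InnerProductSpace

variable {E : Type*} [NormedAddCommGroup E] [InnerProductSpace ℝ E]

theorem norm_sub_sq_add_norm_sub_sq_le {p z y : E} (h : ⟪z - p, y - p⟫ ≤ 0) :
    ‖p - y‖ ^ 2 + ‖p - z‖ ^ 2 ≤ ‖z - y‖ ^ 2 := by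
  have hsplit : z - y = (z - p) - (y - p) := by abel
  rw [norm_sub_rev p y, norm_sub_rev p z, hsplit, norm_sub_sq_real (z - p) (y - p)]
  linarith

variable {P : E →ₗ[ℝ] E}

theorem LinearMap.IsSymmetricProjection.inner_map_self (hP : P.IsSymmetricProjection) (u : E) :
    ⟪u, P u⟫ = ‖P u‖ ^ 2 := by
  rw [← real_inner_self_eq_norm_sq, hP.isSymmetric, ← Module.End.mul_apply,
    hP.isIdempotentElem.eq]

theorem LinearMap.IsSymmetricProjection.norm_map_le (hP : P.IsSymmetricProjection) (u : E) :
    ‖P u‖ ≤ ‖u‖ := by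
  have h := real_inner_le_norm u (P u)
  rw [hP.inner_map_self, sq] at h
  rcases (norm_nonneg (P u)).eq_or_lt with h0 | hpos
  · rw [← h0]; exact norm_nonneg u
  · exact le_of_mul_le_mul_right h hpos

theorem norm_add_smul_map_sub_le (hP : P.IsSymmetricProjection) {a m y : E} {lam : ℝ}
    (ha : P a = a) (hy : P y = y) (hmy : ⟪m - a, m - y⟫ ≤ 0)
    (hlam : P (m - a) ≠ 0 → lam = ‖m - a‖ ^ 2 / ‖P (m - a)‖ ^ 2) :
    ‖a + lam • P (m - a) - y‖ ^ 2 ≤ ‖m - y‖ ^ 2 := by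
  set u := m - a
  set b := P u
  have hab : ⟪a - y, b⟫ = ⟪a - y, u⟫ := by
    rw [real_inner_comm, hP.isSymmetric u, map_sub, ha, hy, real_inner_comm]
  have hm : m - y = u + (a - y) := by simp only [u]; abel
  have hmy' : ‖m - y‖ ^ 2 = ‖a - y‖ ^ 2 + 2 * ⟪a - y, u⟫ + ‖u‖ ^ 2 := by
    rw [hm, norm_add_sq_real, real_inner_comm]; ring
  have hstep :
      ‖a + lam • b - y‖ ^ 2 = ‖a - y‖ ^ 2 + 2 * lam * ⟪a - y, u⟫ + lam ^ 2 * ‖b‖ ^ 2 := by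
    rw [show a + lam • b - y = (a - y) + lam • b by abel, norm_add_sq_real, real_inner_smul_right,
      norm_smul, hab, mul_pow, Real.norm_eq_abs, sq_abs]
    ring
  by_cases hb : b = 0
  · -- `m - a` is then orthogonal to the range of `P`, which contains `a - y`
    have hu : ⟪a - y, u⟫ = 0 := by rw [← hab, hb, inner_zero_right]
    rw [hstep, hmy', hu, hb, norm_zero]
    nlinarith [sq_nonneg ‖u‖]
  · have hbpos : 0 < ‖b‖ ^ 2 := by positivity
    have hbu : ‖b‖ ^ 2 ≤ ‖u‖ ^ 2 := by
      gcongr; exact hP.norm_map_le u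
    have hlam1 : 1 ≤ lam := by rw [hlam hb, le_div_iff₀ hbpos]; linarith
    have hlamb : lam * ‖b‖ ^ 2 = ‖u‖ ^ 2 := by rw [hlam hb]; field_simp
    have hum : ⟪u, m - y⟫ = ⟪a - y, u⟫ + ‖u‖ ^ 2 := by
      rw [hm, inner_add_right, real_inner_self_eq_norm_sq, real_inner_comm]; ring
    -- `‖m - y‖² - ‖a + lam • b - y‖² = (lam - 1) (‖u‖² - 2 ⟪u, m - y⟫)`
    rw [hstep, hmy', show lam ^ 2 * ‖b‖ ^ 2 = lam * ‖u‖ ^ 2 by rw [← hlamb]; ring]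
    nlinarith [sq_nonneg ‖u‖]

structure IsAPAIteration (P : E →ₗ[ℝ] E) (Q : E → E) (a m b : ℕ → E) (lam : ℕ → ℝ) :
    Prop where
  map_a_zero : P (a 0) = a 0
  m_zero : m 0 = Q (a 0)
  b_succ : ∀ i, b (i + 1) = P (m i - a i)
  lam_succ : ∀ i, b (i + 1) ≠ 0 → lam (i + 1) = ‖m i - a i‖ ^ 2 / ‖b (i + 1)‖ ^ 2
  a_succ : ∀ i, a (i + 1) = a i + lam (i + 1) • b (i + 1)
  m_succ : ∀ i, m (i + 1) = Q (a (i + 1))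

namespace IsAPAIteration

variable {Q : E → E} {C : Set E} {a m b : ℕ → E} {lam : ℕ → ℝ}

theorem map_a (h : IsAPAIteration P Q a m b lam) (hP2 : IsIdempotentElem P) (i : ℕ) :
    P (a i) = a i := by
  induction i with
  | zero => exact h.map_a_zero
  | succ i ih => rw [h.a_succ, h.b_succ, map_add, map_smul, ih, ← Module.End.mul_apply, hP2.eq]

theorem m_eq (h : IsAPAIteration P Q a m b lam) : ∀ i, m i = Q (a i)
  | 0 => h.m_zero
  | i + 1 => h.m_succ i

theorem norm_sq_add_norm_sq_le (h : IsAPAIteration P Q a m b lam)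
    (hP : P.IsSymmetricProjection) (hQ : ∀ z, ∀ y ∈ C, ⟪z - Q z, y - Q z⟫ ≤ 0) {y : E}
    (hyC : y ∈ C) (hyP : P y = y) (i : ℕ) :
    ‖m (i + 1) - y‖ ^ 2 + ‖m (i + 1) - a (i + 1)‖ ^ 2 ≤ ‖m i - y‖ ^ 2 := by
  have hmy : ⟪m i - a i, m i - y⟫ ≤ 0 := by
    rw [← neg_sub (a i), ← neg_sub y, inner_neg_neg, h.m_eq i]
    exact hQ (a i) y hyC
  calc ‖m (i + 1) - y‖ ^ 2 + ‖m (i + 1) - a (i + 1)‖ ^ 2 ≤ ‖a (i + 1) - y‖ ^ 2 := by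
        rw [h.m_succ]; exact norm_sub_sq_add_norm_sub_sq_le (hQ _ y hyC)
    _ ≤ ‖m i - y‖ ^ 2 := by
        rw [h.a_succ, h.b_succ]
        exact norm_add_smul_map_sub_le hP (h.map_a hP.isIdempotentElem i) hyP hmy
          (h.b_succ i ▸ h.lam_succ i)

theorem norm_sub_succ_le (h : IsAPAIteration P Q a m b lam)
    (hP : P.IsSymmetricProjection) (hQ : ∀ z, ∀ y ∈ C, ⟪z - Q z, y - Q z⟫ ≤ 0) {y : E}
    (hyC : y ∈ C) (hyP : P y = y) (i : ℕ) : ‖m (i + 1) - y‖ ≤ ‖m i - y‖ := by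
  have := h.norm_sq_add_norm_sq_le hP hQ hyC hyP i
  exact (pow_le_pow_iff_left₀ (norm_nonneg _) (norm_nonneg _) two_ne_zero).mp
    (by nlinarith [sq_nonneg ‖m (i + 1) - a (i + 1)‖])

theorem tendsto_sub_nhds_zero (h : IsAPAIteration P Q a m b lam)
    (hP : P.IsSymmetricProjection) (hQ : ∀ z, ∀ y ∈ C, ⟪z - Q z, y - Q z⟫ ≤ 0) {y : E}
    (hyC : y ∈ C) (hyP : P y = y) : Tendsto (fun i => m i - a i) atTop (𝓝 0) := by
  rw [← tendsto_add_atTop_iff_nat 1, tendsto_zero_iff_norm_tendsto_zero]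
  have hsq : Tendsto (fun i => ‖m (i + 1) - a (i + 1)‖ ^ 2) atTop (𝓝 0) :=
    tendsto_zero_of_le_sub_succ (fun i => sq_nonneg ‖m i - y‖) (fun i => sq_nonneg _)
      fun i => by linarith [h.norm_sq_add_norm_sq_le hP hQ hyC hyP i]
  simpa using hsq.sqrt

theorem exists_tendsto [FiniteDimensional ℝ E] (h : IsAPAIteration P Q a m b lam)
    (hP : P.IsSymmetricProjection) (hC : IsClosed C) (hQC : ∀ z, Q z ∈ C)
    (hQ : ∀ z, ∀ y ∈ C, ⟪z - Q z, y - Q z⟫ ≤ 0) (hfeas : ∃ y ∈ C, P y = y) :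
    ∃ z ∈ C, P z = z ∧ Tendsto m atTop (𝓝 z) ∧ ∀ i, ‖m (i + 1) - z‖ ≤ ‖m i - z‖ := by
  obtain ⟨y₀, hy₀C, hy₀P⟩ := hfeas
  have hsub := h.tendsto_sub_nhds_zero hP hQ hy₀C hy₀P
  have hlim : ∀ z (φ : ℕ → ℕ), StrictMono φ → Tendsto (m ∘ φ) atTop (𝓝 z) →
      z ∈ C ∩ {y | P y = y} := by
    intro z φ hφ hz
    have ha : Tendsto (a ∘ φ) atTop (𝓝 z) := by
      simpa [Function.comp_def] using hz.sub (hsub.comp hφ.tendsto_atTop)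
    have hmC : ∀ i, m i ∈ C := fun i => h.m_eq i ▸ hQC _
    refine ⟨hC.mem_of_tendsto hz (Eventually.of_forall fun i => hmC (φ i)), ?_⟩
    have hPa := (P.continuous_of_finiteDimensional.tendsto z).comp ha
    simp only [Function.comp_def, h.map_a hP.isIdempotentElem] at hPa
    exact tendsto_nhds_unique hPa ha
  obtain ⟨z, ⟨hzC, hzP⟩, hz⟩ :=
    exists_tendsto_of_dist_succ_le (F := C ∩ {y | P y = y}) ⟨y₀, hy₀C, hy₀P⟩
      (fun y hy i => by
        simpa only [dist_eq_norm] using h.norm_sub_succ_le hP hQ hy.1 hy.2 i)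
      hlim
  exact ⟨z, hzC, hzP, hz, h.norm_sub_succ_le hP hQ hzC hzP⟩

end IsAPAIteration

end InnerProductSpace

section DiscreteFourier

variable {n : ℕ}

def zeta (n : ℕ) : ℂ := exp (2 * π * I / n)

theorem zeta_zpow (t : ℤ) : zeta n ^ t = exp (2 * π * I * t / n) := by
  rw [zeta, ← exp_int_mul]; ring_nf

theorem zeta_ne_zero : zeta n ≠ 0 := exp_ne_zero _

theorem isPrimitiveRoot_zeta [NeZero n] : IsPrimitiveRoot (zeta n) n :=
  isPrimitiveRoot_exp n (NeZero.ne n)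

theorem zeta_zpow_eq_one_iff [NeZero n] (t : ℤ) : zeta n ^ t = 1 ↔ (n : ℤ) ∣ t :=
  isPrimitiveRoot_zeta.zpow_eq_one_iff_dvd t

theorem zeta_zpow_eq_of_dvd_sub [NeZero n] {s t : ℤ} (h : (n : ℤ) ∣ s - t) :
    zeta n ^ s = zeta n ^ t := by
  rw [← sub_add_cancel s t, zpow_add₀ zeta_ne_zero, (zeta_zpow_eq_one_iff _).mpr h, one_mul]

theorem sum_zeta_zpow_mul [NeZero n] (t : ℤ) :
    ∑ j : Fin n, zeta n ^ (t * (j : ℕ)) = if (n : ℤ) ∣ t then (n : ℂ) else 0 := by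
  have hpow : ∀ j : Fin n, zeta n ^ (t * (j : ℕ)) = (zeta n ^ t) ^ (j : ℕ) := fun j => by
    rw [zpow_mul, zpow_natCast]
  simp_rw [hpow]
  split_ifs with ht
  · simp [(zeta_zpow_eq_one_iff t).mpr ht]
  · have hne : zeta n ^ t ≠ 1 := fun h => ht ((zeta_zpow_eq_one_iff t).mp h)
    rw [Fin.sum_univ_eq_sum_range (fun j => (zeta n ^ t) ^ j), geom_sum_eq hne, ← zpow_natCast,
      ← zpow_mul, mul_comm, zpow_mul, zpow_natCast, isPrimitiveRoot_zeta.pow_eq_one,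
      one_zpow, sub_self, zero_div]

theorem Fin.intCast_dvd_sub_iff {k l : Fin n} : (n : ℤ) ∣ (k : ℕ) - (l : ℕ) ↔ k = l := by
  refine ⟨fun h => ?_, fun h => by simp [h]⟩
  have := Int.eq_zero_of_abs_lt_dvd h (abs_sub_lt_iff.mpr ⟨by omega, by omega⟩)
  omega

theorem sum_zeta_zpow_sub_mul (k l : Fin n) :
    ∑ j : Fin n, zeta n ^ (((k : ℕ) - (l : ℕ) : ℤ) * (j : ℕ)) =
      if k = l then (n : ℂ) else 0 := by
  have : NeZero n := NeZero.of_pos k.pos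
  rw [sum_zeta_zpow_mul, if_congr Fin.intCast_dvd_sub_iff rfl rfl]

def dft (x : EuclideanSpace ℝ (Fin n)) (k : Fin n) : ℂ :=
  ∑ j : Fin n, (x j : ℂ) * zeta n ^ (-((j : ℕ) * (k : ℕ) : ℤ))

theorem mem_Sband_iff {ω : ℕ} {x : EuclideanSpace ℝ (Fin n)} :
    x ∈ Sband n ω ↔ ∀ k ∉ Kset n ω, dft x k = 0 := by
  have hexp : ∀ j k : Fin n,
      exp (-(2 * (π : ℂ) * I * ((j : ℕ) : ℂ) * ((k : ℕ) : ℂ)) / (n : ℂ)) =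
        zeta n ^ (-((j : ℕ) * (k : ℕ) : ℤ)) := fun j k => by
    rw [zeta_zpow]; push_cast; ring_nf
  simp only [Sband, dft, hexp]
  exact Iff.rfl

theorem dft_inversion (x : EuclideanSpace ℝ (Fin n)) (j : Fin n) :
    (x j : ℂ) = (1 / n) * ∑ k, dft x k * zeta n ^ ((j : ℕ) * (k : ℕ) : ℤ) := by
  have hn : (n : ℂ) ≠ 0 := Nat.cast_ne_zero.mpr j.pos.ne'
  have hterm : ∀ k : Fin n, dft x k * zeta n ^ ((j : ℕ) * (k : ℕ) : ℤ) =
      ∑ l, (x l : ℂ) * zeta n ^ (((j : ℕ) - (l : ℕ) : ℤ) * (k : ℕ)) := fun k => by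
    rw [dft, sum_mul]
    refine sum_congr rfl fun l _ => ?_
    rw [mul_assoc, ← zpow_add₀ zeta_ne_zero]
    ring_nf
  simp_rw [hterm]
  rw [sum_comm]
  simp_rw [← mul_sum, sum_zeta_zpow_sub_mul, mul_ite, mul_zero, sum_ite_eq, if_pos (mem_univ _)]
  field_simp

theorem dft_injective : Function.Injective (dft (n := n)) := fun x y h => by
  ext j
  have hx := dft_inversion x j
  rw [h, ← dft_inversion y j] at hx
  exact_mod_cast hx

def Kfin (n ϖ : ℕ) : Finset (Fin n) :=
  Finset.univ.filter (fun k : Fin n => (k : ℕ) ≤ ϖ - 1 ∨ n - ϖ + 1 ≤ (k : ℕ))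

theorem mem_Kfin {ϖ : ℕ} {k : Fin n} : k ∈ Kfin n ϖ ↔ k ∈ Kset n ϖ := by
  simp [Kfin, Kset]

theorem neg_mem_Kfin [NeZero n] {ϖ : ℕ} {k : Fin n} (hk : k ∈ Kfin n ϖ) : -k ∈ Kfin n ϖ := by
  simp only [Kfin, mem_filter, mem_univ, true_and, Fin.val_neg] at hk ⊢
  split_ifs with h
  · exact Or.inl (Nat.zero_le _)
  · have : (k : ℕ) ≠ 0 := Fin.val_ne_zero_iff.mpr h
    omega

theorem sum_Kfin_neg [NeZero n] {M : Type*} [AddCommMonoid M] {ϖ : ℕ} (f : Fin n → M) :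
    ∑ k ∈ Kfin n ϖ, f (-k) = ∑ k ∈ Kfin n ϖ, f k :=
  sum_nbij' Neg.neg Neg.neg (fun _ => neg_mem_Kfin) (fun _ => neg_mem_Kfin)
    (fun k _ => neg_neg k) (fun k _ => neg_neg k) fun _ _ => rfl

theorem Fin.intCast_dvd_val_neg_add [NeZero n] (k : Fin n) :
    (n : ℤ) ∣ ((-k : Fin n) : ℕ) + (k : ℕ) := by
  have h := congrArg Fin.val (neg_add_cancel k)
  rw [Fin.val_add, Fin.val_zero] at h
  exact_mod_cast Nat.dvd_of_mod_eq_zero h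

def bandKernel (n ϖ : ℕ) (d : ℤ) : ℝ :=
  (1 / n) * ∑ k ∈ Kfin n ϖ, Real.cos (2 * π * (k : ℕ) * d / n)

theorem pband_apply (ϖ : ℕ) (z : EuclideanSpace ℝ (Fin n)) (j : Fin n) :
    Pband n ϖ z j = ∑ l, z l * bandKernel n ϖ ((j : ℕ) - (l : ℕ)) := by
  simp only [Pband, bandKernel, Kfin, WithLp.equiv_symm_apply, PiLp.toLp_apply, mul_sum]
  rw [sum_comm]
  refine sum_congr rfl fun k _ => sum_congr rfl fun l _ => ?_
  push_cast
  ring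

theorem bandKernel_neg (ϖ : ℕ) (d : ℤ) : bandKernel n ϖ (-d) = bandKernel n ϖ d := by
  simp only [bandKernel, Int.cast_neg, mul_neg, neg_div, Real.cos_neg]

theorem ofReal_bandKernel [NeZero n] (ϖ : ℕ) (d : ℤ) :
    (bandKernel n ϖ d : ℂ) = (1 / n) * ∑ k ∈ Kfin n ϖ, zeta n ^ ((k : ℕ) * d) := by
  have hcos : ∀ k : Fin n, (Real.cos (2 * π * (k : ℕ) * d / n) : ℂ) =
      (zeta n ^ ((k : ℕ) * d) + zeta n ^ (-((k : ℕ) * d))) / 2 := fun k => by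
    rw [ofReal_cos, Complex.cos, zeta_zpow, zeta_zpow]; push_cast; ring_nf
  have hneg :
      ∑ k ∈ Kfin n ϖ, zeta n ^ (-((k : ℕ) * d)) = ∑ k ∈ Kfin n ϖ, zeta n ^ ((k : ℕ) * d) := by
    rw [← sum_Kfin_neg fun k : Fin n => zeta n ^ ((k : ℕ) * d)]
    refine sum_congr rfl fun k _ => zeta_zpow_eq_of_dvd_sub ?_
    rw [show -((k : ℕ) * d) - ((-k : Fin n) : ℕ) * d = -((((-k : Fin n) : ℕ) + (k : ℕ)) * d) by
      ring]
    exact ((Fin.intCast_dvd_val_neg_add k).mul_right d).neg_right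
  rw [bandKernel, ofReal_mul, ofReal_sum]
  simp_rw [hcos, ← sum_div, sum_add_distrib, hneg]
  push_cast
  ring

theorem ofReal_pband_apply (ϖ : ℕ) (z : EuclideanSpace ℝ (Fin n)) (j : Fin n) :
    (Pband n ϖ z j : ℂ) =
      (1 / n) * ∑ k ∈ Kfin n ϖ, dft z k * zeta n ^ ((j : ℕ) * (k : ℕ) : ℤ) := by
  have : NeZero n := NeZero.of_pos j.pos
  rw [pband_apply, ofReal_sum]
  simp_rw [ofReal_mul, ofReal_bandKernel, dft, sum_mul, mul_sum]
  rw [sum_comm]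
  refine sum_congr rfl fun k _ => sum_congr rfl fun l _ => ?_
  rw [mul_assoc (z l : ℂ), ← zpow_add₀ zeta_ne_zero]
  ring_nf

theorem dft_pband (ϖ : ℕ) (z : EuclideanSpace ℝ (Fin n)) (k : Fin n) :
    dft (Pband n ϖ z) k = if k ∈ Kfin n ϖ then dft z k else 0 := by
  have hn : (n : ℂ) ≠ 0 := Nat.cast_ne_zero.mpr k.pos.ne'
  have hterm : ∀ j : Fin n, (Pband n ϖ z j : ℂ) * zeta n ^ (-((j : ℕ) * (k : ℕ) : ℤ)) =
      (1 / n) * ∑ k' ∈ Kfin n ϖ, dft z k' * zeta n ^ (((k' : ℕ) - (k : ℕ) : ℤ) * (j : ℕ)) :=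
    fun j => by
      rw [ofReal_pband_apply, mul_assoc, sum_mul]
      congr 1
      refine sum_congr rfl fun k' _ => ?_
      rw [mul_assoc, ← zpow_add₀ zeta_ne_zero]
      ring_nf
  rw [dft]
  simp_rw [hterm, ← mul_sum]
  rw [sum_comm]
  simp_rw [← mul_sum, sum_zeta_zpow_sub_mul, mul_ite, mul_zero, sum_ite_eq']
  split_ifs
  · field_simp
  · simp

theorem pband_pband (ϖ : ℕ) (z : EuclideanSpace ℝ (Fin n)) :
    Pband n ϖ (Pband n ϖ z) = Pband n ϖ z :=
  dft_injective <| funext fun k => by simp only [dft_pband]; split_ifs <;> rfl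

theorem pband_mem_Sband (ϖ : ℕ) (z : EuclideanSpace ℝ (Fin n)) : Pband n ϖ z ∈ Sband n ϖ :=
  mem_Sband_iff.mpr fun k hk => by rw [dft_pband, if_neg (mt mem_Kfin.mp hk)]

theorem pband_const (ϖ : ℕ) (c : ℝ) :
    Pband n ϖ (WithLp.toLp 2 fun _ => c) = WithLp.toLp 2 fun _ => c := by
  refine dft_injective <| funext fun k => ?_
  have : NeZero n := NeZero.of_pos k.pos
  rw [dft_pband]
  split_ifs with hk
  · rfl
  have hk0 : (0 : Fin n) ≠ k := fun h => hk (h ▸ mem_Kfin.mpr (Or.inl (Nat.zero_le _)))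
  have hsum : ∑ j : Fin n, zeta n ^ (-((j : ℕ) * (k : ℕ) : ℤ)) = 0 := by
    simpa [hk0, mul_comm] using sum_zeta_zpow_sub_mul (0 : Fin n) k
  simp only [dft, ← mul_sum, hsum, mul_zero]

theorem pband_inner_comm (ϖ : ℕ) (x y : EuclideanSpace ℝ (Fin n)) :
    ⟪Pband n ϖ x, y⟫ = ⟪x, Pband n ϖ y⟫ := by
  simp only [PiLp.inner_apply, RCLike.inner_apply, conj_trivial, pband_apply, sum_mul, mul_sum]
  rw [sum_comm]
  refine sum_congr rfl fun l _ => sum_congr rfl fun j _ => ?_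
  rw [← bandKernel_neg, neg_sub]
  ring

def pbandLinear (n ϖ : ℕ) : EuclideanSpace ℝ (Fin n) →ₗ[ℝ] EuclideanSpace ℝ (Fin n) where
  toFun := Pband n ϖ
  map_add' x y := by ext j; simp only [pband_apply, PiLp.add_apply, add_mul, sum_add_distrib]
  map_smul' c x := by
    ext j
    simp only [pband_apply, PiLp.smul_apply, smul_eq_mul, mul_sum, mul_assoc, RingHom.id_apply]

theorem pbandLinear_isSymmetricProjection (ϖ : ℕ) : (pbandLinear n ϖ).IsSymmetricProjection :=
  ⟨LinearMap.ext (pband_pband ϖ), pband_inner_comm ϖ⟩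

end DiscreteFourier

section Constraint

variable {n : ℕ}

theorem isClosed_Sgeq (s : EuclideanSpace ℝ (Fin n)) : IsClosed (Sgeq n s) := by
  simp only [Sgeq, Set.ofPred_forall]
  exact isClosed_iInter fun j =>
    isClosed_le continuous_const ((continuous_apply j).comp (PiLp.continuous_ofLp 2 _))

theorem pgeq_mem_Sgeq (s z : EuclideanSpace ℝ (Fin n)) : Pgeq n s z ∈ Sgeq n s :=
  fun _ => le_max_right _ _

theorem inner_sub_pgeq_nonpos (s z : EuclideanSpace ℝ (Fin n)) {y : EuclideanSpace ℝ (Fin n)}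
    (hy : y ∈ Sgeq n s) : ⟪z - Pgeq n s z, y - Pgeq n s z⟫ ≤ 0 := by
  simp only [PiLp.inner_apply, RCLike.inner_apply, conj_trivial, PiLp.sub_apply, Pgeq,
    WithLp.equiv_symm_apply]
  refine sum_nonpos fun j _ => ?_
  rcases le_total |s j| (z j) with h | h
  · simp [max_eq_left h]
  · rw [max_eq_right h]
    exact mul_nonpos_of_nonneg_of_nonpos (by linarith [hy j]) (by linarith)

theorem const_norm_mem_Sgeq (s : EuclideanSpace ℝ (Fin n)) :
    WithLp.toLp 2 (fun _ => ‖s‖) ∈ Sgeq n s := fun j => by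
  simpa only [Real.norm_eq_abs] using PiLp.norm_apply_le s j

end Constraint

theorem APA_monotone_convergence_general
    (n ϖ : ℕ) (s : EuclideanSpace ℝ (Fin n))
    (a m b : ℕ → EuclideanSpace ℝ (Fin n)) (lam : ℕ → ℝ)
    (ha0 : a 0 = 0) (hm0 : m 0 = Pgeq n s (a 0))
    (hb : ∀ i, b (i + 1) = Pband n ϖ (m i - a i))
    (hlam : ∀ i, b (i + 1) ≠ 0 → lam (i + 1) = ‖m i - a i‖ ^ 2 / ‖b (i + 1)‖ ^ 2)
    (ha : ∀ i, a (i + 1) = a i + lam (i + 1) • b (i + 1))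
    (hm : ∀ i, m (i + 1) = Pgeq n s (a (i + 1))) :
    ∃ mdag ∈ Sgeq n s ∩ Sband n ϖ,
      Filter.Tendsto m Filter.atTop (nhds mdag) ∧
      ∀ i, ‖m (i + 1) - mdag‖ ≤ ‖m i - mdag‖ := by
  have hAPA : IsAPAIteration (pbandLinear n ϖ) (Pgeq n s) a m b lam :=
    ⟨by rw [ha0, map_zero], hm0, hb, hlam, ha, hm⟩
  obtain ⟨z, hzC, hzP, hlim, hmono⟩ :=
    hAPA.exists_tendsto (pbandLinear_isSymmetricProjection ϖ) (isClosed_Sgeq s)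
      (pgeq_mem_Sgeq s) (fun z _ => inner_sub_pgeq_nonpos s z)
      ⟨_, const_norm_mem_Sgeq s, pband_const ϖ ‖s‖⟩
  exact ⟨z, ⟨hzC, hzP ▸ pband_mem_Sband ϖ z⟩, hlim, hmono⟩

/-- the AP-A (accelerated) iteration converges monotonically to some
`m† ∈ S_{≥|s|} ∩ S_ϖ`. -/
theorem APA_monotone_convergence
    (n ϖ : ℕ) (hn : 1 ≤ n) (hϖ : 1 ≤ ϖ) (s : EuclideanSpace ℝ (Fin n))
    (a m b : ℕ → EuclideanSpace ℝ (Fin n)) (lam : ℕ → ℝ)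
    (ha0 : a 0 = 0) (hm0 : m 0 = Pgeq n s (a 0))
    (hb : ∀ i, b (i + 1) = Pband n ϖ (m i - a i))
    (hlam : ∀ i, b (i + 1) ≠ 0 → lam (i + 1) = ‖m i - a i‖ ^ 2 / ‖b (i + 1)‖ ^ 2)
    (hlam0 : ∀ i, b (i + 1) = 0 → lam (i + 1) = 0)
    (ha : ∀ i, a (i + 1) = a i + lam (i + 1) • b (i + 1))
    (hm : ∀ i, m (i + 1) = Pgeq n s (a (i + 1)))
    (hb0 : ∀ i, b (i + 1) = 0 → m i = a i) :
    ∃ mdag ∈ Sgeq n s ∩ Sband n ϖ,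
      Filter.Tendsto m Filter.atTop (nhds mdag) ∧
      ∀ i, ‖m (i + 1) - mdag‖ ≤ ‖m i - mdag‖ :=
  APA_monotone_convergence_general n ϖ s a m b lam ha0 hm0 hb hlam ha hm
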